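/- Combinatory ReFLect is not strongly normalizing: there exists a well-typed CR term that admits an infinite reduction sequence. -/
import Mathlib


inductive Ty : Type
  | bool | unit | term
  | arrow : Ty → Ty → Ty
deriving DecidableEq

inductive Exp : Type
  | I : Ty → Exp
  | K : Ty → Ty → Exp
  | S : Ty → Ty → Ty → Exp
  | value : Ty → Exp
  | lift : Exp
  | app : Exp
  | ap : Exp → Exp → Exp
  | quot : Exp → Exp
deriving DecidableEq

/-- Typing rules of Combinatory ReFLect (Figure 1). -/
inductive HasType : Exp → Ty → Prop
  | I (σ) : HasType (.I σ) (.arrow σ σ)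
  | K (σ τ) : HasType (.K σ τ) (.arrow σ (.arrow τ σ))
  | S (σ τ υ) : HasType (.S σ τ υ)
      (.arrow (.arrow σ (.arrow τ υ)) (.arrow (.arrow σ τ) (.arrow σ υ)))
  | value (σ) : HasType (.value σ) (.arrow .term σ)
  | lift : HasType .lift (.arrow .term .term)
  | app : HasType .app (.arrow .term (.arrow .term .term))
  | ap {e₁ e₂ σ τ} : HasType e₁ (.arrow σ τ) → HasType e₂ σ → HasType (.ap e₁ e₂) τ
  | quot {e σ} : HasType e σ → HasType (.quot e) .term

/-- Single-step reduction of CR (Figure 2), closed under congruence. -/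
inductive Step : Exp → Exp → Prop
  | I {σ e} : Step (.ap (.I σ) e) e
  | K {σ τ e₁ e₂} : Step (.ap (.ap (.K σ τ) e₁) e₂) e₁
  | S {σ τ υ e₁ e₂ e₃} :
      Step (.ap (.ap (.ap (.S σ τ υ) e₁) e₂) e₃) (.ap (.ap e₁ e₃) (.ap e₂ e₃))
  | value {σ e} : HasType e σ → Step (.ap (.value σ) (.quot e)) e
  | lift {s} : Step (.ap .lift (.quot s)) (.quot (.quot s))
  | app {e₁ e₂ τ} : HasType (.ap e₁ e₂) τ →
      Step (.ap (.ap .app (.quot e₁)) (.quot e₂)) (.quot (.ap e₁ e₂))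
  | apL {a a' b} : Step a a' → Step (.ap a b) (.ap a' b)
  | apR {a b b'} : Step b b' → Step (.ap a b) (.ap a b')

/-- Reflexive-transitive (congruent) closure of reduction. -/
def Reduces : Exp → Exp → Prop := Relation.ReflTransGen Step

/-- Reduction in one or more steps. -/
def ReducesPlus : Exp → Exp → Prop := Relation.TransGen Step

/-- f = S_{term,term,term} app lift -/
def fTerm : Exp := .ap (.ap (.S .term .term .term) .app) .lift

/-- g = S (K value_term) (S (K f) I), with appropriate type subscripts. -/
def gTerm : Exp :=
  .ap (.ap (.S .term .term .term) (.ap (.K (.arrow .term .term) .term) (.value .term)))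
      (.ap (.ap (.S .term .term .term) (.ap (.K (.arrow .term .term) .term) fTerm)) (.I .term))

def qG : Exp := .quot gTerm
def e0 : Exp := .ap gTerm qG

def AA : Exp := .ap (.K (.arrow .term .term) .term) (.value .term)
def BB : Exp := .ap (.ap (.S .term .term .term) (.ap (.K (.arrow .term .term) .term) fTerm)) (.I .term)

def cyc : ℕ → Exp
  | 0 => e0
  | 1 => .ap (.ap AA qG) (.ap BB qG)
  | 2 => .ap (.value .term) (.ap BB qG)
  | 3 => .ap (.value .term) (.ap (.ap (.ap (.K (.arrow .term .term) .term) fTerm) qG) (.ap (.I .term) qG))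
  | 4 => .ap (.value .term) (.ap fTerm (.ap (.I .term) qG))
  | 5 => .ap (.value .term) (.ap fTerm qG)
  | 6 => .ap (.value .term) (.ap (.ap .app qG) (.ap .lift qG))
  | 7 => .ap (.value .term) (.ap (.ap .app qG) (.quot qG))
  | 8 => .ap (.value .term) (.quot e0)
  | _ => e0

lemma hg : HasType gTerm (.arrow .term .term) := by
  unfold gTerm fTerm
  exact .ap (.ap (.S _ _ _) (.ap (.K _ _) (.value _)))
    (.ap (.ap (.S _ _ _) (.ap (.K _ _) (.ap (.ap (.S _ _ _) .app) .lift))) (.I _))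

lemma he0 : HasType e0 .term := .ap hg (.quot hg)

lemma cycStep : ∀ m < 9, Step (cyc m) (cyc (m + 1)) := by
  intro m hm
  interval_cases m
  · exact .S
  · exact .apL .K
  · exact .apR .S
  · exact .apR (.apL .K)
  · exact .apR (.apR .I)
  · exact .apR .S
  · exact .apR (.apR .lift)
  · exact .apR (.app he0)
  · exact .value he0

/-- CR is not strongly normalizing: some well-typed term has an
infinite reduction sequence. -/
theorem cr_not_strongly_normalizing :
    ∃ (e : Exp) (σ : Ty), HasType e σ ∧
      ∃ h : ℕ → Exp, h 0 = e ∧ ∀ n, Step (h n) (h (n + 1)) := by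
  refine ⟨e0, .term, he0, fun n => cyc (n % 9), by simp [cyc], fun n => ?_⟩
  show Step (cyc (n % 9)) (cyc ((n + 1) % 9))
  rcases Nat.lt_or_ge (n % 9) 8 with h | h
  · have : (n + 1) % 9 = n % 9 + 1 := by omega
    rw [this]
    exact cycStep _ (by omega)
  · have h8 : n % 9 = 8 := by omega
    have : (n + 1) % 9 = 0 := by omega
    rw [h8, this]
    exact cycStep 8 (by omega)
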